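/- Let WC_n^d denote the cycle graph C_n for odd n ≥ 3 with one pendant leaf attached to each vertex (fully whiskered odd cycle). Then M₂(WC_n^d) is homotopy equivalent to the sphere S^{n−1}. -/

import Mathlib

noncomputable section

/-- An abstract simplicial complex on vertex type `V` (faces include `∅`). -/
structure AbsSC (V : Type*) where
  faces : Set (Finset V)
  down_closed : ∀ ⦃σ τ : Finset V⦄, σ ∈ faces → τ ⊆ σ → τ ∈ faces

/-- Geometric realization of an abstract simplicial complex on a finite vertex set. -/
def realization {V : Type*} [Fintype V] (K : AbsSC V) : Type _ :=
  {f : V → ℝ // (∀ v, 0 ≤ f v) ∧ (∑ v, f v) = 1 ∧ ∃ σ ∈ K.faces, ∀ v, f v ≠ 0 → v ∈ σ}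

instance {V : Type*} [Fintype V] (K : AbsSC V) : TopologicalSpace (realization K) := by
  unfold realization; infer_instance

/-- The `n`-sphere. -/
def sphereSpace (n : ℕ) : Type := Metric.sphere (0 : EuclideanSpace ℝ (Fin (n+1))) 1

instance (n : ℕ) : TopologicalSpace (sphereSpace n) := by
  unfold sphereSpace; infer_instance

/-- A base point on the `n`-sphere. -/
def basept (n : ℕ) : sphereSpace n :=
  ⟨EuclideanSpace.single 0 1, by
    simp [sphereSpace, EuclideanSpace.norm_single]⟩

/-- A wedge of `k` copies of the `n`-sphere (one-point union at the base points). -/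
def wedgeSpheres (k n : ℕ) : Type :=
  Quot (fun a b : (Σ _ : Fin k, sphereSpace n) ⊕ Unit =>
    b = Sum.inr () ∧ ∃ i : Fin k, a = Sum.inl ⟨i, basept n⟩)

instance (k n : ℕ) : TopologicalSpace (wedgeSpheres k n) := by
  unfold wedgeSpheres; infer_instance

/-- `H` is a 2-matching of `G`: a set of edges of `G` such that every vertex is
incident to at most 2 of them. -/
def IsTwoMatching {V : Type*} [DecidableEq V] (G : SimpleGraph V) (H : Finset (Sym2 V)) : Prop :=
  ↑H ⊆ G.edgeSet ∧ ∀ v : V, (H.filter (fun e => v ∈ e)).card ≤ 2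

/-- `H` is a matching of `G`. -/
def IsMatchingSet {V : Type*} [DecidableEq V] (G : SimpleGraph V) (H : Finset (Sym2 V)) : Prop :=
  ↑H ⊆ G.edgeSet ∧ ∀ v : V, (H.filter (fun e => v ∈ e)).card ≤ 1

/-- The 2-matching complex `M₂(G)`. -/
def M2 {V : Type*} [DecidableEq V] (G : SimpleGraph V) : AbsSC (Sym2 V) where
  faces := {H | IsTwoMatching G H}
  down_closed := by
    intro σ τ hσ hτ
    exact ⟨fun e he => hσ.1 (hτ he), fun v =>
      le_trans (Finset.card_le_card (Finset.filter_subset_filter _ hτ)) (hσ.2 v)⟩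

/-- The matching complex `M₁(G)`. -/
def M1 {V : Type*} [DecidableEq V] (G : SimpleGraph V) : AbsSC (Sym2 V) where
  faces := {H | IsMatchingSet G H}
  down_closed := by
    intro σ τ hσ hτ
    exact ⟨fun e he => hσ.1 (hτ he), fun v =>
      le_trans (Finset.card_le_card (Finset.filter_subset_filter _ hτ)) (hσ.2 v)⟩

/-- The independence complex of a graph. -/
def IndC {V : Type*} (G : SimpleGraph V) : AbsSC V where
  faces := {S | ∀ a ∈ S, ∀ b ∈ S, ¬ G.Adj a b}
  down_closed := by
    intro σ τ hσ hτ a ha b hb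
    exact hσ a (hτ ha) b (hτ hb)


/-- The fully whiskered `N`-cycle: the cycle on `Fin N` (`inl` vertices) with one
pendant leaf (`inr` vertices) attached to each cycle vertex. -/
def whiskeredCycle (N : ℕ) : SimpleGraph (Fin N ⊕ Fin N) :=
  SimpleGraph.fromRel (fun a b =>
    match a, b with
    | Sum.inl i, Sum.inl j =>
        (j : ℕ) = (i : ℕ) + 1 ∨ ((i : ℕ) = N - 1 ∧ (j : ℕ) = 0)
    | Sum.inl i, Sum.inr j => i = j
    | _, _ => False)

/-!
Write `Xᵢ` and `Yᵢ` for the weights of a point of `M₂` on the whisker at `i` and on the cycle edge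
`{i, i + 1}`. A 2-matching never contains all three edges at a cycle vertex, so whenever both edges
at `i + 1` carry weight, `Yᵢ = 0`. Hence `Φᵢ = Xᵢ - Yᵢ + min (Xᵢ₊₁, Yᵢ₊₁)` never vanishes on the
realization, and `x ↦ Φ x / ‖Φ x‖` maps it to `Sⁿ⁻¹`. A section sends `u` to its positive parts on
the whiskers and its negative parts on the cycle edges. The same incidence constraint shows that `x`
and the section at `Φ x / ‖Φ x‖` always lie in a common face, so the straight-line homotopy between
them stays in the realization.
-/
namespace realization

variable {V : Type*} [Fintype V] {K : AbsSC V}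

@[ext]
theorem ext {x y : realization K} (h : ∀ v, x.1 v = y.1 v) : x = y :=
  Subtype.ext (funext h)

theorem continuous_apply (v : V) : Continuous fun x : realization K => x.1 v :=
  (_root_.continuous_apply v).comp continuous_subtype_val

theorem support_mem_faces (x : realization K) :
    Finset.univ.filter (fun v => x.1 v ≠ 0) ∈ K.faces := by
  obtain ⟨σ, hσ, hsupp⟩ := x.2.2.2
  exact K.down_closed hσ fun v hv => hsupp v (Finset.mem_filter.mp hv).2

def ofSupport (f : V → ℝ) (h0 : ∀ v, 0 ≤ f v) (h1 : ∑ v, f v = 1)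
    (hf : Finset.univ.filter (fun v => f v ≠ 0) ∈ K.faces) : realization K :=
  ⟨f, h0, h1, _, hf, fun v hv => Finset.mem_filter.mpr ⟨Finset.mem_univ v, hv⟩⟩

def segmentPoint (x y : realization K)
    (hxy : Finset.univ.filter (fun v => x.1 v ≠ 0 ∨ y.1 v ≠ 0) ∈ K.faces) (t : unitInterval) :
    realization K :=
  ⟨fun v => (1 - t) * x.1 v + t * y.1 v,
    fun v => add_nonneg (mul_nonneg (unitInterval.one_minus_nonneg t) (x.2.1 v))
      (mul_nonneg t.2.1 (y.2.1 v)),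
    by simp [Finset.sum_add_distrib, ← Finset.mul_sum, x.2.2.1, y.2.2.1],
    _, hxy, fun v hv => by
      by_contra! h
      simp_all⟩

/-- The straight-line homotopy from `s ∘ p` to the identity stays inside the complex. -/
def homotopyEquivOfSection {Y : Type*} [TopologicalSpace Y] (p : C(realization K, Y))
    (s : C(Y, realization K)) (hps : ∀ y, p (s y) = y)
    (hface : ∀ x, Finset.univ.filter (fun v => (s (p x)).1 v ≠ 0 ∨ x.1 v ≠ 0) ∈ K.faces) :
    ContinuousMap.HomotopyEquiv (realization K) Y where
  toFun := p
  invFun := s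
  left_inv := ⟨{
    toFun := fun q => segmentPoint (s (p q.2)) q.2 (hface q.2) q.1
    continuous_toFun := by
      refine Continuous.subtype_mk (continuous_pi fun v => ?_) _
      have ht : Continuous fun q : unitInterval × realization K => (q.1 : ℝ) := by fun_prop
      exact ((continuous_const.sub ht).mul ((continuous_apply v).comp (by fun_prop))).add
        (ht.mul ((continuous_apply v).comp continuous_snd))
    map_zero_left := fun x => by ext; simp [segmentPoint]
    map_one_left := fun x => by ext; simp [segmentPoint] }⟩
  right_inv := by rw [show p.comp s = ContinuousMap.id Y from ContinuousMap.ext hps]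

end realization

theorem mem_edgeSet_of_apply_ne_zero {V : Type*} [Fintype V] [DecidableEq V] {G : SimpleGraph V}
    (x : realization (M2 G)) {e : Sym2 V} (he : x.1 e ≠ 0) : e ∈ G.edgeSet :=
  (realization.support_mem_faces x).1 (by simpa using he)

theorem inv_norm_smul_pos_smul_of_norm_eq_one {E : Type*} [NormedAddCommGroup E]
    [NormedSpace ℝ E] {c : ℝ} (hc : 0 < c) {u : E} (hu : ‖u‖ = 1) : ‖c • u‖⁻¹ • c • u = u := by
  rw [norm_smul, hu, Real.norm_of_nonneg hc.le, mul_one, smul_smul, inv_mul_cancel₀ hc.ne',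
    one_smul]

theorem ofLp_ne_zero_of_mem_sphere {ι : Type*} [Fintype ι] {u : EuclideanSpace ℝ ι}
    (hu : u ∈ Metric.sphere 0 1) : u.ofLp ≠ 0 := by
  rw [Ne, WithLp.ofLp_eq_zero, ← norm_eq_zero, mem_sphere_zero_iff_norm.mp hu]
  exact one_ne_zero

def sphereSpaceHomeomorph {m n : ℕ} (h : m + 1 = n) :
    sphereSpace m ≃ₜ Metric.sphere (0 : EuclideanSpace ℝ (Fin n)) 1 := by
  subst h
  exact Homeomorph.refl _

theorem Finset.card_inter_triple_le_two {α : Type*} [DecidableEq α] {a b c : α} {s : Finset α}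
    (h : ¬(a ∈ s ∧ b ∈ s ∧ c ∈ s)) : ({a, b, c} ∩ s).card ≤ 2 := by
  have hlt : ({a, b, c} ∩ s).card < ({a, b, c} : Finset α).card := by
    refine Finset.card_lt_card ((Finset.ssubset_iff_of_subset Finset.inter_subset_left).mpr ?_)
    simp only [Finset.mem_inter, Finset.mem_insert, Finset.mem_singleton]
    by_contra! h'
    exact h ⟨(h' a (by simp)).2, (h' b (by simp)).2, (h' c (by simp)).2⟩
  have := Finset.card_le_three (a := a) (b := b) (c := c)
  omega

theorem sum_abs_pos_of_ne_zero {ι : Type*} [Fintype ι] {u : ι → ℝ} (hu : u ≠ 0) :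
    0 < ∑ i, |u i| :=
  let ⟨i, hi⟩ := Function.ne_iff.mp hu
  Finset.sum_pos' (fun i _ => abs_nonneg (u i)) ⟨i, Finset.mem_univ i, abs_pos.mpr hi⟩

namespace WhiskeredCycle

open Sum

variable {n : ℕ}

def whisker (i : Fin n) : Sym2 (Fin n ⊕ Fin n) := s(inl i, inr i)

theorem whisker_injective : Function.Injective (whisker (n := n)) := by
  intro i j h
  simpa [whisker] using h

variable [NeZero n]

theorem add_one_ne_self (hn : 2 ≤ n) (i : Fin n) : i + 1 ≠ i := by
  rw [Ne, add_eq_left, Fin.ext_iff, Fin.val_one', Fin.val_zero, Nat.mod_eq_of_lt (by omega)]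
  exact one_ne_zero

theorem add_one_add_one_ne_self (hn : 3 ≤ n) (i : Fin n) : i + 1 + 1 ≠ i := by
  rw [Ne, add_assoc, add_eq_left]
  simp [Fin.ext_iff, Fin.val_add, Nat.mod_eq_of_lt (by omega : 1 < n),
    Nat.mod_eq_of_lt (by omega : 1 + 1 < n)]

theorem val_eq_succ_iff (hn : 2 ≤ n) {i j : Fin n} :
    ((j : ℕ) = i + 1 ∨ ((i : ℕ) = n - 1 ∧ (j : ℕ) = 0)) ↔ j = i + 1 := by
  rw [Fin.ext_iff, Fin.val_add, Fin.val_one', Nat.mod_eq_of_lt (by omega : 1 < n)]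
  have := i.isLt
  rcases (by omega : (i : ℕ) + 1 < n ∨ (i : ℕ) + 1 = n) with h | h
  · rw [Nat.mod_eq_of_lt h]; omega
  · rw [h, Nat.mod_self]; omega

def cycleEdge (i : Fin n) : Sym2 (Fin n ⊕ Fin n) := s(inl i, inl (i + 1))

theorem cycleEdge_injective (hn : 3 ≤ n) : Function.Injective (cycleEdge (n := n)) := by
  intro i j h
  simp only [cycleEdge, Sym2.eq_iff, inl.injEq] at h
  rcases h with ⟨h, -⟩ | ⟨rfl, h⟩
  · exact h
  · exact absurd h (add_one_add_one_ne_self hn j)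

theorem whisker_ne_cycleEdge (i j : Fin n) : whisker i ≠ cycleEdge j := by
  simp [whisker, cycleEdge]

theorem adj_inl_inl_iff (hn : 2 ≤ n) {i j : Fin n} :
    (whiskeredCycle n).Adj (inl i) (inl j) ↔ j = i + 1 ∨ i = j + 1 := by
  simp only [whiskeredCycle, SimpleGraph.fromRel_adj, ne_eq, inl.injEq, val_eq_succ_iff hn]
  refine ⟨And.right, fun h => ⟨?_, h⟩⟩
  rintro rfl
  rcases h with h | h <;> exact add_one_ne_self hn i h.symm

theorem mem_edgeSet_iff (hn : 2 ≤ n) {e : Sym2 (Fin n ⊕ Fin n)} :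
    e ∈ (whiskeredCycle n).edgeSet ↔ (∃ i, e = whisker i) ∨ ∃ i, e = cycleEdge i := by
  induction e using Sym2.ind with
  | _ a b =>
    rw [SimpleGraph.mem_edgeSet]
    rcases a with i | i <;> rcases b with j | j
    · rw [adj_inl_inl_iff hn]
      simp only [whisker, cycleEdge, Sym2.eq_iff, reduceCtorEq, inl.injEq]
      grind
    all_goals simp [whiskeredCycle, whisker, cycleEdge, eq_comm]

theorem eq_of_inl_mem (hn : 2 ≤ n) {e : Sym2 (Fin n ⊕ Fin n)}
    (he : e ∈ (whiskeredCycle n).edgeSet) {j : Fin n} (hj : inl j ∈ e) :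
    e = whisker j ∨ e = cycleEdge (j - 1) ∨ e = cycleEdge j := by
  rcases (mem_edgeSet_iff hn).mp he with ⟨i, rfl⟩ | ⟨i, rfl⟩
  · exact Or.inl (by simpa [whisker, eq_comm] using hj)
  · simp only [cycleEdge, Sym2.mem_iff, inl.injEq] at hj
    rcases hj with rfl | rfl
    · exact Or.inr (Or.inr rfl)
    · exact Or.inr (Or.inl (by rw [add_sub_cancel_right]))

theorem eq_of_inr_mem (hn : 2 ≤ n) {e : Sym2 (Fin n ⊕ Fin n)}
    (he : e ∈ (whiskeredCycle n).edgeSet) {j : Fin n} (hj : inr j ∈ e) : e = whisker j := by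
  rcases (mem_edgeSet_iff hn).mp he with ⟨i, rfl⟩ | ⟨i, rfl⟩ <;> simp_all [whisker, cycleEdge]

theorem isTwoMatching_iff (hn : 3 ≤ n) {H : Finset (Sym2 (Fin n ⊕ Fin n))} :
    IsTwoMatching (whiskeredCycle n) H ↔ ↑H ⊆ (whiskeredCycle n).edgeSet ∧
      ∀ j, ¬(whisker j ∈ H ∧ cycleEdge (j - 1) ∈ H ∧ cycleEdge j ∈ H) := by
  refine ⟨fun h => ⟨h.1, fun j hj => ?_⟩, fun ⟨hsub, hj⟩ => ⟨hsub, ?_⟩⟩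
  · have hne : cycleEdge (j - 1) ≠ cycleEdge j := (cycleEdge_injective hn).ne fun h =>
      add_one_ne_self (by omega) (j - 1) (by rw [sub_add_cancel]; exact h.symm)
    have hcard : ({whisker j, cycleEdge (j - 1), cycleEdge j} : Finset _).card = 3 :=
      Finset.card_eq_three.mpr ⟨_, _, _, whisker_ne_cycleEdge _ _, whisker_ne_cycleEdge _ _,
        hne, rfl⟩
    have hle : {whisker j, cycleEdge (j - 1), cycleEdge j} ⊆ H.filter (inl j ∈ ·) := by
      simp only [Finset.insert_subset_iff, Finset.singleton_subset_iff, Finset.mem_filter]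
      exact ⟨⟨hj.1, by simp [whisker]⟩, ⟨hj.2.1, by simp [cycleEdge]⟩, hj.2.2, by simp [cycleEdge]⟩
    have := (Finset.card_le_card hle).trans (h.2 (inl j))
    omega
  · rintro (j | j)
    · refine (Finset.card_le_card fun e he => ?_).trans (Finset.card_inter_triple_le_two (hj j))
      rw [Finset.mem_filter] at he
      refine Finset.mem_inter.mpr ⟨?_, he.1⟩
      rcases eq_of_inl_mem (by omega) (hsub he.1) he.2 with rfl | rfl | rfl <;> simp
    · refine (Finset.card_le_card (t := {whisker j}) fun e he => ?_).trans (by simp)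
      rw [Finset.mem_filter] at he
      exact Finset.mem_singleton.mpr (eq_of_inr_mem (by omega) (hsub he.1) he.2)

abbrev M2Realization (n : ℕ) : Type := realization (M2 (whiskeredCycle n))

theorem not_all_pos_at_vertex (hn : 3 ≤ n) (x : M2Realization n) (j : Fin n) :
    ¬(0 < x.1 (whisker j) ∧ 0 < x.1 (cycleEdge (j - 1)) ∧ 0 < x.1 (cycleEdge j)) := by
  rintro ⟨h₁, h₂, h₃⟩
  exact ((isTwoMatching_iff hn).mp (realization.support_mem_faces x)).2 j
    (by simp [h₁.ne', h₂.ne', h₃.ne'])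

theorem cycleEdge_eq_zero_of_min_pos (hn : 3 ≤ n) (x : M2Realization n) (j : Fin n)
    (h : 0 < min (x.1 (whisker (j + 1))) (x.1 (cycleEdge (j + 1)))) : x.1 (cycleEdge j) = 0 := by
  rw [lt_min_iff] at h
  have := not_all_pos_at_vertex hn x (j + 1)
  rw [add_sub_cancel_right] at this
  exact le_antisymm (not_lt.mp fun hc => this ⟨h.1, hc, h.2⟩) (x.2.1 _)

def signedWeight (f : Sym2 (Fin n ⊕ Fin n) → ℝ) (i : Fin n) : ℝ :=
  f (whisker i) - f (cycleEdge i) + min (f (whisker (i + 1))) (f (cycleEdge (i + 1)))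

theorem signedWeight_ne_zero (hn : 3 ≤ n) (x : M2Realization n) : signedWeight x.1 ≠ 0 := by
  intro h₀
  have hmin : ∀ i, min (x.1 (whisker (i + 1))) (x.1 (cycleEdge (i + 1))) = 0 := by
    intro i
    refine le_antisymm (not_lt.mp fun hpos => ?_) (le_min (x.2.1 _) (x.2.1 _))
    have := congrFun h₀ i
    rw [Pi.zero_apply, signedWeight, cycleEdge_eq_zero_of_min_pos hn x i hpos] at this
    linarith [x.2.1 (whisker i)]
  have hzero : ∀ i, x.1 (whisker i) = 0 ∧ x.1 (cycleEdge i) = 0 := by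
    intro i
    have hwc : x.1 (whisker i) = x.1 (cycleEdge i) := by
      have := congrFun h₀ i
      rw [Pi.zero_apply, signedWeight, hmin] at this
      simpa [sub_eq_zero] using this
    have := hmin (i - 1)
    rw [sub_add_cancel, hwc, min_self] at this
    exact ⟨hwc.trans this, this⟩
  have hx : x.1 = 0 := funext fun e => by
    by_contra he
    rcases (mem_edgeSet_iff (by omega)).mp (mem_edgeSet_of_apply_ne_zero x he) with
      ⟨i, rfl⟩ | ⟨i, rfl⟩
    exacts [he (hzero i).1, he (hzero i).2]
  simpa [hx] using x.2.2.1

theorem cycleEdge_pos_of_signedWeight_neg (x : M2Realization n) {j : Fin n}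
    (h : signedWeight x.1 j < 0) : 0 < x.1 (cycleEdge j) := by
  unfold signedWeight at h
  linarith [x.2.1 (whisker j), le_min (x.2.1 (whisker (j + 1))) (x.2.1 (cycleEdge (j + 1)))]

theorem cycleEdge_eq_zero_of_signedWeight_pos (hn : 3 ≤ n) (x : M2Realization n) {j : Fin n}
    (hw : x.1 (whisker j) = 0) (h : 0 < signedWeight x.1 j) : x.1 (cycleEdge j) = 0 :=
  cycleEdge_eq_zero_of_min_pos hn x j (by unfold signedWeight at h; linarith [x.2.1 (cycleEdge j)])

theorem isTwoMatching_support_union (hn : 3 ≤ n) (x : M2Realization n)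
    {g : Sym2 (Fin n ⊕ Fin n) → ℝ} (hg : ∀ e, g e ≠ 0 → e ∈ (whiskeredCycle n).edgeSet)
    (hgw : ∀ j, g (whisker j) ≠ 0 → 0 < signedWeight x.1 j)
    (hgc : ∀ j, g (cycleEdge j) ≠ 0 → signedWeight x.1 j < 0) :
    IsTwoMatching (whiskeredCycle n) (Finset.univ.filter fun e => g e ≠ 0 ∨ x.1 e ≠ 0) := by
  have hpos : ∀ j, g (cycleEdge j) ≠ 0 ∨ x.1 (cycleEdge j) ≠ 0 → 0 < x.1 (cycleEdge j) := by
    rintro j (h | h)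
    exacts [cycleEdge_pos_of_signedWeight_neg x (hgc j h), (x.2.1 _).lt_of_ne' h]
  refine (isTwoMatching_iff hn).mpr ⟨fun e he => ?_, fun j ⟨hw, hc', hc⟩ => ?_⟩
  · rcases (Finset.mem_filter.mp he).2 with h | h
    exacts [hg e h, mem_edgeSet_of_apply_ne_zero x h]
  simp only [Finset.mem_filter, Finset.mem_univ, true_and] at hw hc' hc
  by_cases hx : x.1 (whisker j) = 0
  · exact (hpos j hc).ne' <| cycleEdge_eq_zero_of_signedWeight_pos hn x hx <|
      hgw j (hw.resolve_right (not_not.mpr hx))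
  · exact not_all_pos_at_vertex hn x j ⟨(x.2.1 _).lt_of_ne' hx, hpos _ hc', hpos j hc⟩

def ofVector (u : Fin n → ℝ) : Sym2 (Fin n ⊕ Fin n) → ℝ :=
  (∑ i, |u i|)⁻¹ •
    ∑ i, (Pi.single (whisker i) (max (u i) 0) + Pi.single (cycleEdge i) (max (-u i) 0))

theorem ofVector_whisker (u : Fin n → ℝ) (j : Fin n) :
    ofVector u (whisker j) = (∑ i, |u i|)⁻¹ * max (u j) 0 := by
  simp [ofVector, Pi.single_apply, whisker_injective.eq_iff, whisker_ne_cycleEdge]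

theorem ofVector_cycleEdge (hn : 3 ≤ n) (u : Fin n → ℝ) (j : Fin n) :
    ofVector u (cycleEdge j) = (∑ i, |u i|)⁻¹ * max (-u j) 0 := by
  simp [ofVector, Pi.single_apply, (cycleEdge_injective hn).eq_iff,
    (whisker_ne_cycleEdge _ _).symm]

theorem ofVector_nonneg (u : Fin n → ℝ) : 0 ≤ ofVector u :=
  smul_nonneg (by positivity)
    (Finset.sum_nonneg fun _ _ => add_nonneg (Pi.single_nonneg.mpr (le_max_right _ _))
      (Pi.single_nonneg.mpr (le_max_right _ _)))

theorem sum_ofVector {u : Fin n → ℝ} (hu : u ≠ 0) : ∑ e, ofVector u e = 1 := by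
  simp only [ofVector, Pi.smul_apply, Finset.sum_apply, Pi.add_apply, smul_eq_mul]
  rw [← Finset.mul_sum, Finset.sum_comm]
  simp only [Finset.sum_add_distrib, Finset.sum_pi_single', Finset.mem_univ, if_true,
    max_zero_add_max_neg_zero_eq_abs_self]
  exact inv_mul_cancel₀ (sum_abs_pos_of_ne_zero hu).ne'

theorem mem_edgeSet_of_ofVector_ne_zero (hn : 3 ≤ n) {u : Fin n → ℝ} {e : Sym2 (Fin n ⊕ Fin n)}
    (he : ofVector u e ≠ 0) : e ∈ (whiskeredCycle n).edgeSet := by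
  rw [mem_edgeSet_iff (by omega)]
  by_contra! h
  simp [ofVector, h.1, h.2] at he

theorem pos_of_ofVector_whisker_ne_zero {u : Fin n → ℝ} {j : Fin n}
    (h : ofVector u (whisker j) ≠ 0) : 0 < u j := by
  by_contra! hj
  simp [ofVector_whisker, max_eq_right hj] at h

theorem neg_of_ofVector_cycleEdge_ne_zero (hn : 3 ≤ n) {u : Fin n → ℝ} {j : Fin n}
    (h : ofVector u (cycleEdge j) ≠ 0) : u j < 0 := by
  by_contra! hj
  simp [ofVector_cycleEdge hn, max_eq_right (neg_nonpos.mpr hj)] at h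

theorem signedWeight_ofVector (hn : 3 ≤ n) (u : Fin n → ℝ) :
    signedWeight (ofVector u) = (∑ i, |u i|)⁻¹ • u := by
  have hmin (a : ℝ) : min (max a 0) (max (-a) 0) = 0 := by grind
  ext i
  rw [signedWeight, ofVector_whisker, ofVector_cycleEdge hn, ofVector_whisker,
    ofVector_cycleEdge hn, ← mul_sub, max_zero_sub_max_neg_zero_eq_self,
    ← mul_min_of_nonneg _ _ (by positivity),
    hmin, mul_zero, add_zero, Pi.smul_apply, smul_eq_mul]

theorem isTwoMatching_support_ofVector (hn : 3 ≤ n) (u : Fin n → ℝ) :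
    IsTwoMatching (whiskeredCycle n) (Finset.univ.filter fun e => ofVector u e ≠ 0) := by
  refine (isTwoMatching_iff hn).mpr ⟨fun e he => ?_, fun j hj => ?_⟩
  · exact mem_edgeSet_of_ofVector_ne_zero hn (Finset.mem_filter.mp he).2
  · obtain ⟨hw, -, hc⟩ := hj
    simp only [Finset.mem_filter, Finset.mem_univ, true_and] at hw hc
    exact (pos_of_ofVector_whisker_ne_zero hw).not_gt (neg_of_ofVector_cycleEdge_ne_zero hn hc)

local notation "𝕊" => Metric.sphere (0 : EuclideanSpace ℝ (Fin n)) 1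

theorem continuous_signedWeight : Continuous fun x : M2Realization n => signedWeight x.1 :=
  continuous_pi fun _ => ((realization.continuous_apply _).sub (realization.continuous_apply _)).add
    ((realization.continuous_apply _).min (realization.continuous_apply _))

def toSphere (hn : 3 ≤ n) : C(M2Realization n, 𝕊) where
  toFun x := ⟨‖WithLp.toLp 2 (signedWeight x.1)‖⁻¹ • WithLp.toLp 2 (signedWeight x.1), by
    simpa using norm_smul_inv_norm (𝕜 := ℝ) (by simpa using signedWeight_ne_zero hn x)⟩
  continuous_toFun := by
    have h := (PiLp.continuous_toLp 2 _).comp (continuous_signedWeight (n := n))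
    refine Continuous.subtype_mk (((continuous_norm.comp h).inv₀ fun x => ?_).smul h) _
    simpa using signedWeight_ne_zero hn x

def ofSphere (hn : 3 ≤ n) : C(𝕊, M2Realization n) where
  toFun u := realization.ofSupport (ofVector u.1.ofLp) (ofVector_nonneg _)
    (sum_ofVector (ofLp_ne_zero_of_mem_sphere u.2)) (isTwoMatching_support_ofVector hn _)
  continuous_toFun := by
    refine Continuous.subtype_mk ?_ _
    have h := (PiLp.continuous_ofLp 2 _).comp (continuous_subtype_val (p := (· ∈ 𝕊)))
    have hi (i : Fin n) : Continuous fun u : 𝕊 => u.1.ofLp i := (continuous_apply i).comp h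
    refine ((continuous_finsetSum _ fun i _ => (hi i).abs).inv₀
      fun u => (sum_abs_pos_of_ne_zero (ofLp_ne_zero_of_mem_sphere u.2)).ne').smul
      (continuous_finsetSum _ fun i _ => ?_)
    have hs (e : Sym2 (Fin n ⊕ Fin n)) := continuous_single (A := fun _ => ℝ) e
    exact ((hs _).comp ((hi i).max continuous_const)).add
      ((hs _).comp ((hi i).neg.max continuous_const))

theorem toSphere_ofSphere (hn : 3 ≤ n) (u : 𝕊) : toSphere hn (ofSphere hn u) = u := by
  apply Subtype.ext
  change ‖WithLp.toLp 2 (signedWeight (ofVector u.1.ofLp))‖⁻¹ •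
    WithLp.toLp 2 (signedWeight (ofVector u.1.ofLp)) = u.1
  rw [signedWeight_ofVector hn, WithLp.toLp_smul, WithLp.toLp_ofLp]
  exact inv_norm_smul_pos_smul_of_norm_eq_one
    (inv_pos.mpr (sum_abs_pos_of_ne_zero (ofLp_ne_zero_of_mem_sphere u.2)))
    (mem_sphere_zero_iff_norm.mp u.2)

theorem isTwoMatching_ofSphere_toSphere (hn : 3 ≤ n) (x : M2Realization n) :
    IsTwoMatching (whiskeredCycle n)
      (Finset.univ.filter fun e => (ofSphere hn (toSphere hn x)).1 e ≠ 0 ∨ x.1 e ≠ 0) := by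
  have hc : 0 < ‖WithLp.toLp 2 (signedWeight x.1)‖⁻¹ :=
    inv_pos.mpr (norm_pos_iff.mpr (by simpa using signedWeight_ne_zero hn x))
  refine isTwoMatching_support_union hn x (fun e he => mem_edgeSet_of_ofVector_ne_zero hn he)
    (fun j hj => (mul_pos_iff_of_pos_left hc).mp (pos_of_ofVector_whisker_ne_zero hj))
    (fun j hj => ?_)
  exact neg_of_mul_neg_right (neg_of_ofVector_cycleEdge_ne_zero hn hj) hc.le

def homotopyEquivSphere (hn : 3 ≤ n) : ContinuousMap.HomotopyEquiv (M2Realization n) 𝕊 :=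
  realization.homotopyEquivOfSection (toSphere hn) (ofSphere hn) (toSphere_ofSphere hn)
    (isTwoMatching_ofSphere_toSphere hn)

end WhiskeredCycle

theorem stmt_10_general (n : ℕ) (hn : 3 ≤ n) :
    Nonempty (ContinuousMap.HomotopyEquiv (realization (M2 (whiskeredCycle n)))
      (sphereSpace (n - 1))) := by
  have : NeZero n := ⟨by omega⟩
  exact ⟨(WhiskeredCycle.homotopyEquivSphere hn).trans
    (sphereSpaceHomeomorph (by omega : n - 1 + 1 = n)).symm.toHomotopyEquiv⟩

/-- for odd `n ≥ 3`, the 2-matching complex of the fully whiskered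
`n`-cycle is homotopy equivalent to `S^{n-1}`. -/
theorem stmt_10 (n : ℕ) (hn : 3 ≤ n) (hodd : Odd n) :
    Nonempty (ContinuousMap.HomotopyEquiv (realization (M2 (whiskeredCycle n)))
      (sphereSpace (n - 1))) :=
  stmt_10_general n hn

end
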